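/- arXiv:2204.01344 — 4 statements merged into one kernel-verified Lean document; each statement's English description precedes it below -/
import Mathlib

section
/- Let T be a closed subsemigroup of βS and F a filter on S with closure equal to T, and let p ∈ T. If p ∈ T·r·p for all r ∈ T, then p belongs to the smallest two-sided ideal K(T) of T. -/
open Filter Set Topology

attribute [local instance] Ultrafilter.mul Ultrafilter.semigroup

/-- `A` is `F`-syndetic: for every `V ∈ F` there is a finite `G ⊆ V` with `⋃_{g∈G} g⁻¹A ∈ F`. -/
def FSyndetic {S : Type*} [Mul S] (F : Filter S) (A : Set S) : Prop :=
  ∀ V ∈ F, ∃ G : Finset S, ↑G ⊆ V ∧ {y : S | ∃ g ∈ G, g * y ∈ A} ∈ F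

/-- The cell `(x⁻¹ G⁻¹ A) ∩ V` used in the definition of piecewise `F`-syndeticity. -/
def pwCell {S : Type*} [Mul S] (A V : Set S) (G : Finset S) (x : S) : Set S :=
  {y : S | y ∈ V ∧ ∃ g ∈ G, g * (x * y) ∈ A}

/-- `A` is piecewise `F`-syndetic. -/
def PiecewiseFSyndetic {S : Type*} [Mul S] (F : Filter S) (A : Set S) : Prop :=
  ∃ (G : Set S → Finset S) (W : Set S → Set S),
    (∀ V ∈ F, ↑(G V) ⊆ V ∧ W V ∈ F) ∧
    ∀ P : Finset (Set S × S), (∀ q ∈ P, q.1 ∈ F ∧ q.2 ∈ W q.1) →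
      (⋂ q ∈ P, pwCell A q.1 (G q.1) q.2).Nonempty

/-- `I` is a two-sided ideal of the subsemigroup `T` of `βS`. -/
def IsTwoSidedIdealIn {S : Type*} [Semigroup S] (T I : Set (Ultrafilter S)) : Prop :=
  I.Nonempty ∧ I ⊆ T ∧ ∀ p ∈ T, ∀ q ∈ I, p * q ∈ I ∧ q * p ∈ I

/-- `p` belongs to the smallest two-sided ideal `K(T)` of `T` (i.e. to every two-sided ideal). -/
def InSmallestIdeal {S : Type*} [Semigroup S] (T : Set (Ultrafilter S)) (p : Ultrafilter S) : Prop :=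
  ∀ I : Set (Ultrafilter S), IsTwoSidedIdealIn T I → p ∈ I

/-- `L` is a left ideal of the subsemigroup `T` of `βS`. -/
def IsLeftIdealIn {S : Type*} [Semigroup S] (T L : Set (Ultrafilter S)) : Prop :=
  L.Nonempty ∧ L ⊆ T ∧ ∀ p ∈ T, ∀ q ∈ L, p * q ∈ L

/-- `L` is a minimal left ideal of `T`. -/
def IsMinimalLeftIdealIn {S : Type*} [Semigroup S] (T L : Set (Ultrafilter S)) : Prop :=
  IsLeftIdealIn T L ∧ ∀ L' : Set (Ultrafilter S), IsLeftIdealIn T L' → L' ⊆ L → L' = L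

/-- If `p ∈ T` and `p ∈ T·r·p` for all `r ∈ T`, then `p` belongs to the smallest
two-sided ideal `K(T)` of `T`. -/
theorem stmt3 {S : Type*} [Semigroup S] (T : Set (Ultrafilter S)) (hTclosed : IsClosed T)
    (hTsub : ∀ p ∈ T, ∀ q ∈ T, p * q ∈ T) (F : Filter S)
    (hFT : {p : Ultrafilter S | F ≤ ↑p} = T) (p : Ultrafilter S) (hp : p ∈ T)
    (h : ∀ r ∈ T, ∃ q ∈ T, p = q * r * p) :
    InSmallestIdeal T p := by
  intro I ⟨⟨r, hrI⟩, hIT, hideal⟩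
  obtain ⟨q, hqT, hpeq⟩ := h r (hIT hrI)
  have hqr : q * r ∈ I := (hideal q hqT r hrI).1
  have : (q * r) * p ∈ I := (hideal p hp (q * r) hqr).2
  rwa [hpeq]
end

section
/- Let T be a closed subsemigroup of βS, F a filter on S with closure T such that for every V ∈ F there exist V₁, V₂ ∈ F with V₁V₂ ⊆ V. If A ⊆ S is piecewise F-syndetic, then there exists an idempotent e in the smallest ideal K(T) such that {x ∈ S : x⁻¹A ∈ e} is F-syndetic. -/
open Filter Set Topology

attribute [local instance] Ultrafilter.mul Ultrafilter.semigroup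

section Aux

variable {S : Type*} [Semigroup S]

theorem mem_ultra_mul {s : Set S} {U V : Ultrafilter S} :
    s ∈ U * V ↔ {a | {b | a * b ∈ s} ∈ V} ∈ U := Iff.rfl

theorem exists_mem_finset_ultra {H : Finset S} {p : S → S → Prop} {r : Ultrafilter S} :
    {y | ∃ h ∈ H, p h y} ∈ r ↔ ∃ h ∈ H, {y | p h y} ∈ r := by
  have h1 : {y | ∃ h ∈ H, p h y} = ⋃ h ∈ (H : Set S), {y | p h y} := by
    ext y; simp
  rw [h1, Ultrafilter.finite_biUnion_mem_iff H.finite_toSet]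
  simp

end Aux

section Big

variable {S : Type*} [Semigroup S]

set_option linter.unusedSectionVars false

theorem big_lemma (T : Set (Ultrafilter S)) (hcl : IsClosed T)
    (hsub : ∀ p ∈ T, ∀ q ∈ T, p * q ∈ T) (u : Ultrafilter S) (hu : u ∈ T) :
    ∃ e : Ultrafilter S, e * e = e ∧
      (∀ I : Set (Ultrafilter S),
        (I.Nonempty ∧ I ⊆ T ∧ ∀ p ∈ T, ∀ q ∈ I, p * q ∈ I ∧ q * p ∈ I) → e ∈ I) ∧
      e ∈ T ∧ (∃ q ∈ T, e = q * u) ∧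
      ∀ r ∈ T, e = r * e ∨ ∃ w ∈ T, e = w * (r * e) := by
  have hTc : IsCompact T := hcl.isCompact
  set img : Ultrafilter S → Set (Ultrafilter S) := fun p => (· * p) '' T with himg
  have himgc : ∀ p, IsCompact (img p) := fun p =>
    hTc.image (Ultrafilter.continuous_mul_left p)
  set L₀ : Set (Ultrafilter S) := img u with hL₀def
  set 𝒮 : Set (Set (Ultrafilter S)) :=
    {L | L.Nonempty ∧ IsClosed L ∧ L ⊆ L₀ ∧ ∀ p ∈ T, ∀ q ∈ L, p * q ∈ L} with h𝒮
  have hL₀mem : L₀ ∈ 𝒮 := by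
    refine ⟨⟨u * u, ⟨u, hu, rfl⟩⟩, (himgc u).isClosed, le_refl _, ?_⟩
    rintro p hp q ⟨q', hq', rfl⟩
    exact ⟨p * q', hsub p hp q' hq', mul_assoc p q' u⟩
  have hL₀T : L₀ ⊆ T := by
    rintro q ⟨q', hq', rfl⟩
    exact hsub q' hq' u hu
  obtain ⟨m, -, hm, hmin⟩ : ∃ m, m ⊆ L₀ ∧ Minimal (· ∈ 𝒮) m := by
    apply zorn_superset_nonempty
    · intro c hc hchain hcne
      refine ⟨⋂₀ c, ⟨?_, ?_, ?_, ?_⟩, fun s hs => sInter_subset_of_mem hs⟩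
      · rw [sInter_eq_iInter]
        haveI : Nonempty c := hcne.to_subtype
        apply IsCompact.nonempty_iInter_of_directed_nonempty_isCompact_isClosed
        · rintro ⟨a, ha⟩ ⟨b, hb⟩
          rcases eq_or_ne a b with h | h
          · exact ⟨⟨a, ha⟩, Subset.rfl, h ▸ Subset.rfl⟩
          rcases hchain ha hb h with h' | h'
          · exact ⟨⟨a, ha⟩, Subset.rfl, h'⟩
          · exact ⟨⟨b, hb⟩, h', Subset.rfl⟩
        · exact fun i => (hc i.2).1
        · exact fun i => (hc i.2).2.1.isCompact
        · exact fun i => (hc i.2).2.1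
      · exact isClosed_sInter fun L hL => (hc hL).2.1
      · obtain ⟨L, hL⟩ := hcne
        exact (sInter_subset_of_mem hL).trans (hc hL).2.2.1
      · intro p hp q hq
        rw [mem_sInter] at hq ⊢
        exact fun L hL => (hc hL).2.2.2 p hp q (hq L hL)
    · exact hL₀mem
  obtain ⟨hmne, hmcl, hmL₀, hmid⟩ := hm
  have hmT : m ⊆ T := fun q hq => hL₀T (hmL₀ hq)
  -- key minimality property
  have key : ∀ p ∈ m, insert p (img p) = m := by
    intro p hp
    have himgm : img p ⊆ m := by
      rintro q ⟨q', hq', rfl⟩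
      exact hmid q' hq' p hp
    have hNm : insert p (img p) ⊆ m := insert_subset hp himgm
    have hN𝒮 : insert p (img p) ∈ 𝒮 := by
      refine ⟨⟨p, mem_insert _ _⟩, (by rw [Set.insert_eq]; exact isClosed_singleton.union (himgc p).isClosed), hNm.trans hmL₀, ?_⟩
      rintro r hr q (rfl | ⟨q', hq', rfl⟩)
      · exact subset_insert _ _ ⟨r, hr, rfl⟩
      · exact subset_insert _ _ ⟨r * q', hsub r hr q' hq', mul_assoc r q' p⟩
    exact Subset.antisymm hNm (hmin hN𝒮 hNm)
  obtain ⟨e, hem, hee⟩ :=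
    exists_idempotent_in_compact_subsemigroup Ultrafilter.continuous_mul_left m hmne
      hmcl.isCompact (fun x hx y hy => hmid x (hmT hx) y hy)
  refine ⟨e, hee, ?_, hmT hem, ?_, ?_⟩
  · rintro I ⟨⟨i, hiI⟩, hIT, hImul⟩
    have hiT : i ∈ T := hIT hiI
    have hieI : i * e ∈ I := (hImul e (hmT hem) i hiI).2
    have hiem : i * e ∈ m := hmid i hiT e hem
    have := key (i * e) hiem
    rw [← this] at hem
    rcases hem with h | ⟨w, hw, hwe⟩
    · rw [h]; exact hieI
    · rw [← hwe]; exact (hImul w hw (i * e) hieI).1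
  · obtain ⟨q', hq', h⟩ := hmL₀ hem
    exact ⟨q', hq', h.symm⟩
  · intro r hr
    have hrem : r * e ∈ m := hmid r hr e hem
    have := key (r * e) hrem
    rw [← this] at hem
    rcases hem with h | ⟨w, hw, hwe⟩
    · exact Or.inl h
    · exact Or.inr ⟨w, hw, hwe.symm⟩

end Big

section Main2


variable {S : Type*} [Semigroup S]

set_option linter.unusedSectionVars false in
theorem shift_mem_iff (e : Ultrafilter S) (H : Finset S) (A : Set S) (a : S) :
    {b | a * b ∈ {z | ∃ g ∈ H, g * z ∈ A}} ∈ e ↔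
      ∃ g ∈ H, g * a ∈ {x : S | {y | x * y ∈ A} ∈ e} := by
  rw [show {b | a * b ∈ {z | ∃ g ∈ H, g * z ∈ A}} = {b | ∃ g ∈ H, g * a * b ∈ A} by
    ext b; simp [mul_assoc]]
  rw [exists_mem_finset_ultra]
  rfl

end Main2

/-- If `A` is piecewise `F`-syndetic, and for every `V ∈ F` there are `V₁,V₂ ∈ F` with
`V₁V₂ ⊆ V`, then there is an idempotent `e ∈ K(T)` with `{x : x⁻¹A ∈ e}` `F`-syndetic. -/
theorem stmt4 {S : Type*} [Semigroup S] (T : Set (Ultrafilter S)) (hTclosed : IsClosed T)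
    (hTsub : ∀ p ∈ T, ∀ q ∈ T, p * q ∈ T) (F : Filter S)
    (hFT : {p : Ultrafilter S | F ≤ ↑p} = T)
    (hVV : ∀ V ∈ F, ∃ V₁ ∈ F, ∃ V₂ ∈ F, ∀ a ∈ V₁, ∀ b ∈ V₂, a * b ∈ V)
    (A : Set S) (hA : PiecewiseFSyndetic F A) :
    ∃ e : Ultrafilter S, InSmallestIdeal T e ∧ e * e = e ∧
      FSyndetic F {x : S | {y : S | x * y ∈ A} ∈ e} := by
  classical
  obtain ⟨G, W, hGW, hFIP⟩ := hA
  have hSne : Nonempty S := by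
    have h := hFIP ∅ (by simp)
    rw [show (⋂ q ∈ (∅ : Finset (Set S × S)), pwCell A q.1 (G q.1) q.2) = Set.univ by simp] at h
    exact Set.nonempty_iff_univ_nonempty.mpr h
  by_cases hF : F.NeBot
  · -- main case
    set T' : Set (Ultrafilter S) := {p | (↑p : Filter S) ≤ F} with hT'def
    have hT'mem : ∀ p : Ultrafilter S, p ∈ T' ↔ ∀ V ∈ F, V ∈ p := by
      intro p; simp [hT'def, Filter.le_def]
    have hT'cl : IsClosed T' := by
      have h : T' = ⋂ V ∈ F.sets, {p : Ultrafilter S | V ∈ p} := by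
        ext p
        simp only [Set.mem_iInter, Set.mem_setOf_eq]
        exact hT'mem p
      rw [h]
      exact isClosed_biInter fun V _ => ultrafilter_isClosed_basic V
    have hT'sub : ∀ p ∈ T', ∀ q ∈ T', p * q ∈ T' := by
      intro p hp q hq
      rw [hT'mem] at hp hq ⊢
      intro V hV
      obtain ⟨V₁, h1, V₂, h2, h12⟩ := hVV V hV
      rw [show (V ∈ p * q) ↔ {a | {b | a * b ∈ V} ∈ q} ∈ p from Iff.rfl]
      exact mem_of_superset (hp V₁ h1) fun a ha =>
        mem_of_superset (hq V₂ h2) fun b hb => h12 a ha b hb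
    -- the ultrafilter of cells
    have hgen : (Filter.generate
        ((fun q : Set S × S => pwCell A q.1 (G q.1) q.2) ''
          {q | q.1 ∈ F ∧ q.2 ∈ W q.1})).NeBot := by
      rw [Filter.generate_neBot_iff]
      intro t hts htfin
      have hch : ∀ C ∈ t, ∃ q : Set S × S,
          (q.1 ∈ F ∧ q.2 ∈ W q.1) ∧ pwCell A q.1 (G q.1) q.2 = C := by
        intro C hC
        obtain ⟨q, hq, hqe⟩ := hts hC
        exact ⟨q, hq, hqe⟩
      choose g hg1 hg2 using hch
      set P : Finset (Set S × S) :=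
        htfin.toFinset.attach.image
          (fun C => g C.1 (htfin.mem_toFinset.mp C.2)) with hPdef
      have hP : ∀ q ∈ P, q.1 ∈ F ∧ q.2 ∈ W q.1 := by
        intro q hq
        simp only [hPdef, Finset.mem_image, Finset.mem_attach, true_and] at hq
        obtain ⟨⟨C, hC⟩, rfl⟩ := hq
        exact hg1 _ _
      obtain ⟨y, hy⟩ := hFIP P hP
      refine ⟨y, ?_⟩
      rw [Set.mem_sInter]
      intro C hC
      rw [Set.mem_iInter₂] at hy
      have hmem : g C (htfin.mem_toFinset.mp (htfin.mem_toFinset.mpr hC)) ∈ P := by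
        simp only [hPdef, Finset.mem_image, Finset.mem_attach, true_and]
        exact ⟨⟨C, htfin.mem_toFinset.mpr hC⟩, rfl⟩
      have := hy _ hmem
      rwa [hg2 C _] at this
    set u : Ultrafilter S := @Ultrafilter.of _ _ hgen with hudef
    have hucell : ∀ V ∈ F, ∀ x ∈ W V, pwCell A V (G V) x ∈ u := by
      intro V hV x hx
      exact (Ultrafilter.of_le _)
        (Filter.mem_generate_of_mem ⟨(V, x), ⟨hV, hx⟩, rfl⟩)
    have huT' : u ∈ T' := by
      rw [hT'mem]
      intro V hV
      obtain ⟨x, hx⟩ := Filter.nonempty_of_mem (f := F) (hGW V hV).2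
      exact mem_of_superset (hucell V hV x hx) fun y hy => hy.1
    obtain ⟨e, hee, -, heT', ⟨q, hqT', hequ⟩, hmin⟩ := big_lemma T' hT'cl hT'sub u huT'
    set B : Set S := {x : S | {y | x * y ∈ A} ∈ e} with hBdef
    have hBV : ∀ V ∈ F, {z | ∃ g' ∈ G V, g' * z ∈ A} ∈ e := by
      intro V hV
      rw [hequ, mem_ultra_mul]
      refine mem_of_superset ((hT'mem q).mp hqT' (W V) (hGW V hV).2) fun x hx => ?_
      exact mem_of_superset (hucell V hV x hx) fun y hy => hy.2
    refine ⟨e, ?_, hee, ?_⟩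
    · rintro I ⟨⟨i, hiI⟩, hIT, -⟩
      have hiT : F ≤ ↑i := by
        have h := hIT hiI
        rw [← hFT] at h
        exact h
      have hiF : (↑i : Filter S) ≤ F := by
        intro V hV
        by_contra hV'
        have hc : Vᶜ ∈ i := Ultrafilter.compl_mem_iff_notMem.mpr hV'
        have h2 : Vᶜ ∈ F := hiT hc
        have h3 : (∅ : Set S) ∈ F := by
          have := Filter.inter_mem hV h2
          simpa using this
        exact Filter.empty_notMem F h3
      have hFi : (↑i : Filter S) = F := le_antisymm hiF hiT
      have hei : e = i := by
        have h1 : (↑e : Filter S) ≤ ↑i := by rw [hFi]; exact heT'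
        exact Ultrafilter.coe_le_coe.mp h1
      rw [hei]; exact hiI
    · intro V hV
      by_contra hcon
      push_neg at hcon
      -- hcon : ∀ H : Finset S, ↑H ⊆ V → {y | ∃ h ∈ H, h * y ∈ B} ∉ F
      have hgen2 : (Filter.generate
          (F.sets ∪ (fun h => {y | h * y ∈ B}ᶜ) '' V)).NeBot := by
        rw [Filter.generate_neBot_iff]
        intro t hts htfin
        have htafin : (t ∩ F.sets).Finite := htfin.subset Set.inter_subset_left
        have hta : ⋂₀ (t ∩ F.sets) ∈ F :=
          (Filter.sInter_mem htafin).mpr fun U hU => hU.2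
        have htb : ∀ C ∈ t \ F.sets, ∃ h, h ∈ V ∧ {y | h * y ∈ B}ᶜ = C := by
          intro C hC
          rcases hts hC.1 with h | h
          · exact absurd h hC.2
          · obtain ⟨h', hh', he⟩ := h
            exact ⟨h', hh', he⟩
        choose gb hgb1 hgb2 using htb
        have htbfin : (t \ F.sets).Finite := htfin.subset Set.diff_subset
        set H : Finset S :=
          htbfin.toFinset.attach.image
            (fun C => gb C.1 (htbfin.mem_toFinset.mp C.2)) with hHdef
        have hHV : ↑H ⊆ V := by
          intro h hh
          simp only [hHdef, Finset.coe_image, Set.mem_image, Finset.mem_coe,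
            Finset.mem_attach, true_and] at hh
          obtain ⟨⟨C, hC⟩, -, rfl⟩ := hh
          exact hgb1 _ _
        have hD : {y | ∃ h ∈ H, h * y ∈ B} ∉ F := hcon H hHV
        have hnsub : ¬(⋂₀ (t ∩ F.sets) ⊆ {y | ∃ h ∈ H, h * y ∈ B}) := by
          intro hsub
          exact hD (mem_of_superset hta hsub)
        obtain ⟨y, hy1, hy2⟩ := Set.not_subset.mp hnsub
        refine ⟨y, ?_⟩
        rw [Set.mem_sInter]
        intro C hC
        by_cases hCF : C ∈ F.sets
        · exact hy1 C ⟨hC, hCF⟩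
        · have hCb : C ∈ t \ F.sets := ⟨hC, hCF⟩
          rw [← hgb2 C hCb]
          intro hyC
          apply hy2
          refine ⟨gb C hCb, ?_, not_not.mp fun hn => hn (by exact hyC)⟩
          simp only [hHdef, Finset.mem_image, Finset.mem_attach, true_and]
          exact ⟨⟨C, htbfin.mem_toFinset.mpr hCb⟩, rfl⟩
      set r : Ultrafilter S := @Ultrafilter.of _ _ hgen2 with hrdef
      have hrT' : r ∈ T' := by
        rw [hT'mem]
        intro V'' hV''
        exact (Ultrafilter.of_le _)
          (Filter.mem_generate_of_mem (Or.inl hV''))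
      have hrc : ∀ h ∈ V, {y | h * y ∈ B} ∉ r := by
        intro h hh
        have : {y | h * y ∈ B}ᶜ ∈ r :=
          (Ultrafilter.of_le _)
            (Filter.mem_generate_of_mem (Or.inr ⟨h, hh, rfl⟩))
        exact Ultrafilter.compl_mem_iff_notMem.mp this
      obtain ⟨V₁, h1, V₂, h2, h12⟩ := hVV V hV
      set V' : Set S := V₁ ∩ V₂ ∩ V with hV'def
      have hV' : V' ∈ F := Filter.inter_mem (Filter.inter_mem h1 h2) hV
      have hBV' := hBV V' hV'
      rcases hmin r hrT' with hcase | ⟨w, hwT', hcase⟩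
      · rw [hcase, mem_ultra_mul] at hBV'
        have hseteq : {a : S | {b | a * b ∈ {z | ∃ g' ∈ G V', g' * z ∈ A}} ∈ e} =
            {a : S | ∃ g' ∈ G V', g' * a ∈ B} := by
          ext a
          exact shift_mem_iff e (G V') A a
        rw [hseteq] at hBV'
        obtain ⟨g', hg', hmemr⟩ := exists_mem_finset_ultra.mp hBV'
        exact hrc g' (((hGW V' hV').1 hg').2) hmemr
      · rw [hcase, mem_ultra_mul] at hBV'
        have hV'w : V' ∈ w := (hT'mem w).mp hwT' V' hV'
        obtain ⟨x, hx1, hx2⟩ := Ultrafilter.nonempty_of_mem (inter_mem hV'w hBV')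
        have hseteq : {b : S | x * b ∈ {z | ∃ g' ∈ G V', g' * z ∈ A}} =
            {b : S | ∃ g' ∈ G V', g' * x * b ∈ A} := by
          ext b; simp [mul_assoc]
        rw [Set.mem_setOf_eq, hseteq] at hx2
        obtain ⟨g', hg', hmemre⟩ := exists_mem_finset_ultra.mp hx2
        have hcV : g' * x ∈ V := by
          have hg'V' : g' ∈ V' := (hGW V' hV').1 hg'
          exact h12 g' hg'V'.1.1 x hx1.1.2
        rw [mem_ultra_mul] at hmemre
        have hseteq2 : {a : S | {b | a * b ∈ {b' | g' * x * b' ∈ A}} ∈ e} =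
            {a : S | g' * x * a ∈ B} := by
          ext a
          have : {b : S | a * b ∈ {b' | g' * x * b' ∈ A}} = {b : S | (g' * x * a) * b ∈ A} := by
            ext b; simp [mul_assoc]
          rw [Set.mem_setOf_eq, this]
          rfl
        rw [hseteq2] at hmemre
        exact hrc (g' * x) hcV hmemre
  · -- degenerate case F = ⊥
    have hbot : F = ⊥ := Filter.not_neBot.mp hF
    obtain ⟨a⟩ := hSne
    have hTuniv : ∀ p : Ultrafilter S, p ∈ T := by
      intro p
      rw [← hFT]
      simp [hbot]
    obtain ⟨e, hee, hK, -, -, -⟩ := big_lemma T hTclosed hTsub (pure a) (hTuniv _)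
    refine ⟨e, fun I hI => hK I hI, hee, fun V _ => ⟨∅, by simp, by rw [hbot]; exact Filter.mem_bot⟩⟩
end

section
/- Let T be a closed subsemigroup of βS, F a filter on S with closure T, and suppose M = ⋂_{F∈I} cl(C_F) where ⟨C_F⟩_{F∈I} is a family of subsets of S such that for all F ∈ I and all x ∈ C_F there is G ∈ I with C_G ⊆ x⁻¹C_F, and the family is downward directed. Then M is a subsemigroup of βS. -/
open Filter Set Topology

attribute [local instance] Ultrafilter.mul Ultrafilter.semigroup

/-- If `⟨C i⟩` is downward directed and satisfies the shift condition, then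
`M = ⋂ i, cl (C i)` is closed under the ultrafilter multiplication. -/
theorem stmt11 {S : Type*} [Semigroup S] (T : Set (Ultrafilter S)) (hTclosed : IsClosed T)
    (hTsub : ∀ p ∈ T, ∀ q ∈ T, p * q ∈ T) (F : Filter S)
    (hFT : {p : Ultrafilter S | F ≤ ↑p} = T)
    {ι : Type*} (C : ι → Set S)
    (hdir : ∀ i j : ι, ∃ k : ι, C k ⊆ C i ∩ C j)
    (hshift : ∀ i : ι, ∀ x ∈ C i, ∃ j : ι, C j ⊆ {y : S | x * y ∈ C i}) :
    ∀ p ∈ ⋂ i, {r : Ultrafilter S | C i ∈ r},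
      ∀ q ∈ ⋂ i, {r : Ultrafilter S | C i ∈ r},
        p * q ∈ ⋂ i, {r : Ultrafilter S | C i ∈ r} := by
  intro p hp q hq
  simp only [Set.mem_iInter, Set.mem_setOf_eq] at hp hq ⊢
  intro i
  have : ∀ᶠ x in (p : Filter S), ∀ᶠ y in (q : Filter S), x * y ∈ C i := by
    filter_upwards [hp i] with x hx
    obtain ⟨j, hj⟩ := hshift i x hx
    exact Filter.mem_of_superset (hq j) hj
  exact (Ultrafilter.eventually_mul p q _).2 this
end

section
/- Let F be a filter on S ⊆ T such that every member of F is piecewise syndetic in the multiplicative semigroup (S, ·). Then every homogeneous polynomial system that is partition regular on S is also F-partition regular on S. -/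
open Filter Set

attribute [local instance] Ultrafilter.mul Ultrafilter.semigroup

/-- `I` is a two-sided ideal of the semigroup `βS`. -/
def IsTwoSidedIdealBeta {S : Type*} [Semigroup S] (I : Set (Ultrafilter S)) : Prop :=
  I.Nonempty ∧ ∀ p : Ultrafilter S, ∀ q ∈ I, p * q ∈ I ∧ q * p ∈ I

/-- `p` belongs to the smallest two-sided ideal `K(βS, ⊙)`. -/
def InSmallestIdealBeta {S : Type*} [Semigroup S] (p : Ultrafilter S) : Prop :=
  ∀ I : Set (Ultrafilter S), IsTwoSidedIdealBeta I → p ∈ I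

/-- `A` is piecewise syndetic in `(S, ·)`: its closure in `βS` meets `K(βS, ⊙)`. -/
def PiecewiseSyndetic {S : Type*} [Semigroup S] (A : Set S) : Prop :=
  ∃ p : Ultrafilter S, A ∈ p ∧ InSmallestIdealBeta p

/-!
The ultrafilters all of whose members contain a solution form a two-sided ideal of `βS`: it is
nonempty by partition regularity and compactness of `βS`, and it is absorbing because solutions of
a homogeneous system stay solutions when all coordinates are multiplied by the same element.
Hence it contains `K(βS)`, so it contains an ultrafilter `p ∋ V` for each `V ∈ F`; the colour
class that belongs to `p` meets `V` in a set which, being in `p`, contains a solution.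
-/

lemma MvPolynomial.IsHomogeneous.eval_mul_left {σ R : Type*} [CommSemiring R]
    {φ : MvPolynomial σ R} {n : ℕ} (hφ : φ.IsHomogeneous n) (c : R) (x : σ → R) :
    MvPolynomial.eval (fun i => c * x i) φ = c ^ n * MvPolynomial.eval x φ := by
  simp only [MvPolynomial.eval_eq, Finset.mul_sum]
  refine Finset.sum_congr rfl fun s hs => ?_
  rw [hφ.degree_eq_sum_deg_support hs, ← Finset.prod_pow_eq_pow_sum]
  simp only [mul_pow, Finset.prod_mul_distrib]
  ring

section PartitionRegular

variable {S ι : Type*}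

def IsPartitionRegular (C : Set (ι → S)) : Prop :=
  ∀ (k : ℕ) (A : Fin k → Set S), ⋃ j, A j = univ → ∃ j, ∃ a ∈ C, ∀ i, a i ∈ A j

def partitionRegularWitnesses (C : Set (ι → S)) : Set (Ultrafilter S) :=
  {p | ∀ A ∈ p, ∃ a ∈ C, ∀ i, a i ∈ A}

theorem IsPartitionRegular.witnesses_nonempty {C : Set (ι → S)} (hC : IsPartitionRegular C) :
    (partitionRegularWitnesses C).Nonempty := by
  by_contra hempty
  have hfree : ∀ p : Ultrafilter S, ∃ A ∈ p, ∀ a ∈ C, ∃ i, a i ∉ A := by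
    simpa [partitionRegularWitnesses, Set.Nonempty] using hempty
  choose A hAp hAfree using hfree
  -- a finite subcover of `βS` by the basic open sets `{q | A p ∈ q}` is a colouring of `S`
  obtain ⟨t, ht⟩ :=
    isCompact_univ.elim_finite_subcover (fun p => {q : Ultrafilter S | A p ∈ q})
      (fun p => ultrafilter_isOpen_basic _) (fun p _ => mem_iUnion.2 ⟨p, hAp p⟩)
  obtain ⟨j, a, haC, haA⟩ := hC t.card (fun j => A (t.equivFin.symm j)) <| by
    refine eq_univ_of_forall fun x => ?_
    obtain ⟨p, hp, hx⟩ := mem_iUnion₂.1 (ht (mem_univ (pure x)))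
    exact mem_iUnion.2 ⟨t.equivFin ⟨p, hp⟩, by simpa using hx⟩
  obtain ⟨i, hi⟩ := hAfree _ a haC
  exact hi (haA i)

theorem isTwoSidedIdealBeta_partitionRegularWitnesses [Semigroup S] [Finite ι]
    {C : Set (ι → S)} (hC : IsPartitionRegular C)
    (hmul_left : ∀ (c : S), ∀ a ∈ C, (fun i => c * a i) ∈ C)
    (hmul_right : ∀ (c : S), ∀ a ∈ C, (fun i => a i * c) ∈ C) :
    IsTwoSidedIdealBeta (partitionRegularWitnesses C) := by
  refine ⟨hC.witnesses_nonempty, fun p q hq => ⟨fun A hA => ?_, fun A hA => ?_⟩⟩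
  · obtain ⟨c, hc⟩ := ((Ultrafilter.eventually_mul p q (· ∈ A)).1 hA).exists
    obtain ⟨a, haC, ha⟩ := hq _ hc
    exact ⟨_, hmul_left c a haC, ha⟩
  · obtain ⟨a, haC, ha⟩ := hq _ ((Ultrafilter.eventually_mul q p (· ∈ A)).1 hA)
    obtain ⟨c, hc⟩ := p.nonempty_of_mem (iInter_mem.2 ha)
    exact ⟨_, hmul_right c a haC, mem_iInter.1 hc⟩

theorem PiecewiseSyndetic.exists_mem_of_isPartitionRegular [Semigroup S] [Finite ι]
    {C : Set (ι → S)} (hC : IsPartitionRegular C)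
    (hmul_left : ∀ (c : S), ∀ a ∈ C, (fun i => c * a i) ∈ C)
    (hmul_right : ∀ (c : S), ∀ a ∈ C, (fun i => a i * c) ∈ C)
    {V : Set S} (hV : PiecewiseSyndetic V) {k : ℕ} {A : Fin k → Set S}
    (hA : ⋃ j, A j = univ) :
    ∃ j, ∃ a ∈ C, ∀ i, a i ∈ A j ∧ a i ∈ V := by
  obtain ⟨p, hVp, hpK⟩ := hV
  have hpC : p ∈ partitionRegularWitnesses C :=
    hpK _ (isTwoSidedIdealBeta_partitionRegularWitnesses hC hmul_left hmul_right)
  obtain ⟨j, hj⟩ : ∃ j, A j ∈ p :=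
    Ultrafilter.eventually_exists_iff.1 (.of_forall fun x => mem_iUnion.1 (hA ▸ mem_univ x))
  obtain ⟨a, haC, ha⟩ := hpC _ (inter_mem hj hVp)
  exact ⟨j, a, haC, ha⟩

end PartitionRegular

/-- If every member of `F` is piecewise syndetic in `(S, ·)`, then every homogeneous polynomial
system that is partition regular on `S` is also `F`-partition regular on `S`. -/
theorem stmt19 {R : Type*} [CommSemiring R] (S : Subsemigroup R) (F : Filter ↥S)
    (hpws : ∀ A ∈ F, PiecewiseSyndetic (A : Set ↥S))
    {n m : ℕ} (P : Fin m → MvPolynomial (Fin n) R) (d : Fin m → ℕ)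
    (hhom : ∀ l, (P l).IsHomogeneous (d l))
    (hPR : ∀ (k : ℕ) (A : Fin k → Set ↥S), ({x : ↥S | (x : R) ≠ 0} ⊆ ⋃ j, A j) →
        ∃ (j : Fin k) (a : Fin n → ↥S), (∀ i, a i ∈ A j ∧ (a i : R) ≠ 0) ∧
          ∀ l, MvPolynomial.eval (fun i => (a i : R)) (P l) = 0) :
    ∀ V ∈ F, ∀ (k : ℕ) (A : Fin k → Set ↥S), (⋃ j, A j) = Set.univ →
      ∃ (j : Fin k) (a : Fin n → ↥S), (∀ i, a i ∈ A j ∧ a i ∈ V) ∧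
        ∀ l, MvPolynomial.eval (fun i => (a i : R)) (P l) = 0 := by
  intro V hV k A hA
  set C : Set (Fin n → S) := {a | ∀ l, MvPolynomial.eval (fun i => (a i : R)) (P l) = 0}
  have hC : IsPartitionRegular C := fun k A hA => by
    obtain ⟨j, a, ha, hsol⟩ := hPR k A (hA ▸ subset_univ _)
    exact ⟨j, a, hsol, fun i => (ha i).1⟩
  have hmul_left : ∀ (c : S), ∀ a ∈ C, (fun i => c * a i) ∈ C := fun c a ha l => by
    simp only [MulMemClass.coe_mul, (hhom l).eval_mul_left, ha l, mul_zero]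
  have hmul_right : ∀ (c : S), ∀ a ∈ C, (fun i => a i * c) ∈ C := fun c a ha => by
    simpa only [mul_comm] using hmul_left c a ha
  obtain ⟨j, a, haC, ha⟩ :=
    (hpws V hV).exists_mem_of_isPartitionRegular hC hmul_left hmul_right hA
  exact ⟨j, a, ha, haC⟩
end
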